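/- Let K be a commutative ring with unity, A = {a_1, …, a_q} a finite alphabet, and let w, w′ be words over A of the same multi-degree (m_1, …, m_q). Suppose η, η′ ∈ ℤ satisfy η λ(w) = η′ λ(w′) in K⟨A⟩. Then for every fixed multi-degree vector (k_1, …, k_q) of nonnegative integers, η · Σ_{w = s u t, α(u) = (k_1,…,k_q)} λ(u) (−1)^{|s|} (s̃ ⧢ t) = η′ · Σ_{w′ = s′ u′ t′, α(u′) = (k_1,…,k_q)} λ(u′) (−1)^{|s′|} (s̃′ ⧢ t′), where each sum ranges over all factorizations (each occurrence counted separately) whose middle factor has the given multi-degree. -/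

import Mathlib

open scoped BigOperators
open Classical

noncomputable section

/-- The free associative algebra `K⟨A⟩` on the alphabet `A`, realized as the monoid algebra
of the free monoid on `A`. -/
abbrev NC (K A : Type*) [CommRing K] : Type _ := MonoidAlgebra K (FreeMonoid A)

variable (K A : Type*) [CommRing K]

/-- The monomial (word) `w` viewed as an element of `K⟨A⟩`. -/
def wp (w : List A) : NC K A := MonoidAlgebra.single (FreeMonoid.ofList w) 1

/-- The coefficient `(P, w)` of the word `w` in the polynomial `P`. -/
def coeffW (P : NC K A) (w : List A) : K := P.coeff (FreeMonoid.ofList w)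

/-- The canonical scalar product `(P, Q) = ∑_w (P, w)(Q, w)` on `K⟨A⟩`. -/
def sp (P Q : NC K A) : K := Finsupp.sum P.coeff fun w c => c * Q.coeff w

attribute [local instance] LieRing.ofAssociativeRing

/-- The free Lie algebra `L_K(A)`: the Lie subalgebra of `K⟨A⟩` (with the commutator
bracket) generated by the letters. -/
def freeLie : LieSubalgebra K (NC K A) :=
  LieSubalgebra.lieSpan K (NC K A) (Set.range fun a : A => wp K A [a])

/-- The adjoint `λ` of the left-normed Lie bracketing, on words:
`λ(ε) = 0`, `λ(a) = a`, `λ(aub) = λ(au)b − λ(ub)a`. -/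
def lam : List A → NC K A
  | [] => 0
  | [a] => wp K A [a]
  | a :: b :: t =>
      lam (a :: (b :: t).dropLast) * wp K A [(b :: t).getLast (by simp)] -
        lam (b :: t) * wp K A [a]
  termination_by w => w.length
  decreasing_by
    all_goals simp [List.length_dropLast]

/-- `λ` extended linearly to the whole of `K⟨A⟩`. -/
def lamLin : NC K A →ₗ[K] NC K A :=
  Finsupp.linearCombination K (fun w : FreeMonoid A => lam K A (FreeMonoid.toList w)) ∘ₗ
    (MonoidAlgebra.coeffLinearEquiv K).toLinearMap

/-- The shuffle product of two words, as an element of `K⟨A⟩`. -/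
def shuffleW : List A → List A → NC K A
  | [], v => wp K A v
  | u, [] => wp K A u
  | a :: u, b :: v =>
      wp K A [a] * shuffleW u (b :: v) + wp K A [b] * shuffleW (a :: u) v
  termination_by u v => u.length + v.length
  decreasing_by
    all_goals simp [Nat.lt_succ_iff]

/-- The shuffle product on `K⟨A⟩`, extended bilinearly. -/
def sh (P Q : NC K A) : NC K A :=
  Finsupp.sum P.coeff fun u cu =>
    Finsupp.sum Q.coeff fun v cv =>
      (cu * cv) • shuffleW K A (FreeMonoid.toList u) (FreeMonoid.toList v)

/-- The right residual `P ▷ q` of `P` by a word `q`: `(P ▷ q, w) = (P, qw)`. -/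
def rresW (P : NC K A) (q : List A) : NC K A :=
  Finsupp.sum P.coeff fun u c =>
    if q <+: FreeMonoid.toList u then c • wp K A ((FreeMonoid.toList u).drop q.length) else 0

/-- The right residual `P ▷ Q`: `(P ▷ Q, w) = (P, Qw)`. -/
def rres (P Q : NC K A) : NC K A :=
  Finsupp.sum Q.coeff fun v c => c • rresW K A P (FreeMonoid.toList v)

/-- Auxiliary left residual by a word `q`: `(q ◁ P, w) = (P, wq)`. -/
def lresW (P : NC K A) (q : List A) : NC K A :=
  Finsupp.sum P.coeff fun u c =>
    if q <:+ FreeMonoid.toList u then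
      c • wp K A ((FreeMonoid.toList u).take ((FreeMonoid.toList u).length - q.length))
    else 0

/-- The left residual `Q ◁ P`: `(Q ◁ P, w) = (P, wQ)`. -/
def lres (Q P : NC K A) : NC K A :=
  Finsupp.sum Q.coeff fun v c => c • lresW K A P (FreeMonoid.toList v)

/-- The number of trailing occurrences of the letter `a` in the word `v`. -/
def trailCount (a : A) (v : FreeMonoid A) : ℕ :=
  ((FreeMonoid.toList v).reverse.takeWhile fun x => decide (x = a)).length

/-- `d(P)`: the least number of trailing `a`'s among the words in the support of `P`. -/
def dP (a : A) (P : NC K A) : ℕ :=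
  sInf {n : ℕ | ∃ v ∈ Finsupp.support P.coeff, trailCount A a v = n}

/-- `e(P)`: the largest number of trailing `a`'s among the words in the support of `P`. -/
def eP (a : A) (P : NC K A) : ℕ :=
  Finset.sup (Finsupp.support P.coeff) (trailCount A a)

/-- The polynomial `P_i` in the decomposition `P = ∑ P_i b a^i`: it collects (and strips
the suffix `b a^i` from) the monomials of `P` with exactly `i` trailing `a`'s. -/
def partBA (a b : A) (i : ℕ) (P : NC K A) : NC K A :=
  Finsupp.sum P.coeff fun v c =>
    if (FreeMonoid.toList v).reverse.take (i + 1) = List.replicate i a ++ [b] then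
      c • wp K A ((FreeMonoid.toList v).take ((FreeMonoid.toList v).length - (i + 1)))
    else 0

/-- A word is Lyndon if it is nonempty and strictly smaller, in the lexicographic order,
than each of its proper nonempty right factors. -/
def IsLyndon {A : Type*} [LinearOrder A] (w : List A) : Prop :=
  w ≠ [] ∧ ∀ s t : List A, w = t ++ s → t ≠ [] → s ≠ [] → List.Lex (· < ·) w s

/-- `γ(w)`: the nonnegative generator of the ideal `{(P, w) : P ∈ L_ℤ(A)}` of `ℤ`. -/
def gammaW (A : Type*) (w : List A) : ℤ :=
  haveI : (Ideal.span {c : ℤ | ∃ P ∈ freeLie ℤ A, coeffW ℤ A P w = c}).IsPrincipal :=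
    IsPrincipalIdealRing.principal _
  (Submodule.IsPrincipal.generator
    (Ideal.span {c : ℤ | ∃ P ∈ freeLie ℤ A, coeffW ℤ A P w = c})).natAbs

end

/-!
Peeling the last letter off `w` in the recursion `λ(aub) = λ(au)b − λ(ub)a`, and using the
matching recursion `(ua) ⧢ (vb) = ((ua) ⧢ v)b + (u ⧢ (vb))a` of the shuffle product, gives for
every `m ≥ 1` the factorization identity
`λ(w) = ∑_{w = sut, |u| = m} λ(u) (−1)^{|s|} (s̃ ⧢ t)`.
Every word in the support of `λ(u) P` begins with a rearrangement of `u`. Hence the additive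
projection of `K⟨A⟩` onto the words whose prefix of length `|k|` has multidegree `k` sends
`λ(w)` to the part of this sum with `α(u) = k`, and applying it to `η λ(w) = η' λ(w')` gives
the theorem.
-/

open Finset

section

variable (K A : Type*) [CommRing K]

lemma wp_nil : wp K A [] = 1 := rfl

lemma wp_append (u v : List A) : wp K A (u ++ v) = wp K A u * wp K A v := by
  simp [wp, MonoidAlgebra.single_mul_single]

lemma lam_nil : lam K A [] = 0 := by rw [lam]

lemma lam_singleton (a : A) : lam K A [a] = wp K A [a] := by rw [lam]

lemma lam_cons_cons (a b : A) (t : List A) :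
    lam K A (a :: b :: t) =
      lam K A (a :: (b :: t).dropLast) * wp K A [(b :: t).getLast (List.cons_ne_nil b t)] -
        lam K A (b :: t) * wp K A [a] := by
  rw [lam]

lemma lam_cons_append_singleton (a z : A) (p : List A) :
    lam K A (a :: (p ++ [z])) =
      lam K A (a :: p) * wp K A [z] - lam K A (p ++ [z]) * wp K A [a] := by
  obtain ⟨b, t, hbt⟩ : ∃ b t, p ++ [z] = b :: t := List.exists_cons_of_ne_nil (by simp)
  simp only [hbt, lam_cons_cons]
  simp [← hbt]

lemma shuffleW_nil_left (v : List A) : shuffleW K A [] v = wp K A v := by rw [shuffleW]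

lemma shuffleW_nil_right (u : List A) : shuffleW K A u [] = wp K A u := by
  cases u <;> rw [shuffleW]; simp

lemma shuffleW_cons_cons (a b : A) (u v : List A) :
    shuffleW K A (a :: u) (b :: v) =
      wp K A [a] * shuffleW K A u (b :: v) + wp K A [b] * shuffleW K A (a :: u) v := by
  rw [shuffleW]

lemma support_wp_subset (w : List A) :
    (wp K A w).coeff.support ⊆ {FreeMonoid.ofList w} :=
  Finsupp.support_single_subset

lemma toList_perm_of_mem_support_lam :
    ∀ (u : List A) (x : FreeMonoid A), x ∈ (lam K A u).coeff.support → x.toList.Perm u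
  | [] => by simp [lam_nil]
  | [a] => fun x hx => by
      rw [lam_singleton] at hx
      rw [Finset.mem_singleton.1 (support_wp_subset K A [a] hx)]
      rfl
  | a :: b :: t => fun x hx => by
      have hbt := List.dropLast_append_getLast (List.cons_ne_nil b t)
      rw [lam_cons_cons] at hx
      rcases Finset.mem_union.1 (Finsupp.support_sub hx) with h | h
      all_goals
        obtain ⟨y, hy, l, hl, rfl⟩ :=
          Finset.mem_mul.1 (MonoidAlgebra.support_coeff_mul_subset _ _ h)
        rw [Finset.mem_singleton.1 (support_wp_subset K A _ hl)]
      · have := (toList_perm_of_mem_support_lam _ y hy).append_right [(b :: t).getLast (by simp)]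
        rwa [List.cons_append, hbt] at this
      · exact ((toList_perm_of_mem_support_lam _ y hy).append_right [a]).trans
          (List.perm_append_singleton a (b :: t))
  termination_by u => u.length

lemma take_length_perm_of_mem_support_lam_mul (u : List A) (Q : NC K A) (x : FreeMonoid A)
    (hx : x ∈ (lam K A u * Q).coeff.support) : (x.toList.take u.length).Perm u := by
  obtain ⟨y, hy, z, -, rfl⟩ := Finset.mem_mul.1 (MonoidAlgebra.support_coeff_mul_subset _ _ hx)
  have hyu := toList_perm_of_mem_support_lam K A u y hy
  rw [FreeMonoid.toList_mul, List.take_left' hyu.length_eq]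
  exact hyu

lemma shuffleW_append_singleton_append_singleton (a b : A) : ∀ u v : List A,
    shuffleW K A (u ++ [a]) (v ++ [b]) =
      shuffleW K A (u ++ [a]) v * wp K A [b] + shuffleW K A u (v ++ [b]) * wp K A [a]
  | [], [] => by
      simp only [List.nil_append, shuffleW_cons_cons, shuffleW_nil_left, shuffleW_nil_right,
        ← wp_append, List.singleton_append]
  | c :: u, [] => by
      have ih := shuffleW_append_singleton_append_singleton a b u []
      simp only [List.cons_append, List.nil_append, shuffleW_cons_cons,
        shuffleW_nil_right] at ih ⊢
      simp only [ih, mul_add, add_mul, mul_assoc, ← wp_append, List.cons_append,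
        List.append_assoc, List.nil_append]
      abel
  | [], d :: v => by
      have ih := shuffleW_append_singleton_append_singleton a b [] v
      simp only [List.cons_append, List.nil_append, shuffleW_cons_cons,
        shuffleW_nil_left] at ih ⊢
      simp only [ih, mul_add, add_mul, mul_assoc, ← wp_append, List.cons_append,
        List.append_assoc]
      abel
  | c :: u, d :: v => by
      have ih₁ := shuffleW_append_singleton_append_singleton a b u (d :: v)
      have ih₂ := shuffleW_append_singleton_append_singleton a b (c :: u) v
      simp only [List.cons_append] at ih₁ ih₂
      simp only [List.cons_append, shuffleW_cons_cons, ih₁, ih₂]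
      noncomm_ring
  termination_by u v => u.length + v.length
  decreasing_by all_goals simp; try omega

end

section

variable (K A : Type*) [CommRing K]

noncomputable def factorTerm (m : ℕ) (w : List A) (i : ℕ) : NC K A :=
  lam K A ((w.drop i).take m) * ((-1 : K) ^ i • shuffleW K A (w.take i).reverse (w.drop (i + m)))

variable {K A}

lemma factorTerm_zero_of_length_le {m : ℕ} {w : List A} (h : w.length ≤ m) :
    factorTerm K A m w 0 = lam K A w := by
  simp [factorTerm, List.take_of_length_le h, List.drop_of_length_le h, shuffleW_nil_left, wp_nil]

lemma factorTerm_append_singleton_zero {m : ℕ} {u : List A} (z : A) (h : m ≤ u.length) :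
    factorTerm K A m (u ++ [z]) 0 = factorTerm K A m u 0 * wp K A [z] := by
  simp [factorTerm, List.take_append_of_le_length h, List.drop_append_of_le_length h,
    shuffleW_nil_left, wp_append, mul_assoc]

lemma factorTerm_cons_append_singleton_succ {m j : ℕ} {p : List A} (a z : A)
    (h : j + m ≤ p.length) :
    factorTerm K A m (a :: (p ++ [z])) (j + 1) =
      factorTerm K A m (a :: p) (j + 1) * wp K A [z] -
        factorTerm K A m (p ++ [z]) j * wp K A [a] := by
  have hfac : ((p ++ [z]).drop j).take m = (p.drop j).take m := by
    rw [List.drop_append_of_le_length (by omega), List.take_append_of_le_length (by simp; omega)]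
  simp only [factorTerm, List.drop_succ_cons, List.take_succ_cons, List.reverse_cons,
    show j + 1 + m = j + m + 1 by omega, hfac,
    List.take_append_of_le_length (by omega : j ≤ p.length), List.drop_append_of_le_length h,
    shuffleW_append_singleton_append_singleton, pow_succ, mul_neg_one]
  generalize (-1 : K) ^ j = c
  simp only [smul_add, mul_add, neg_smul, mul_neg, neg_mul, mul_smul_comm, smul_mul_assoc,
    mul_assoc]
  abel

lemma factorTerm_cons_succ_of_length_le {m j : ℕ} {r : List A} (a : A) (h : r.length ≤ j + m) :
    factorTerm K A m (a :: r) (j + 1) = -(factorTerm K A m r j * wp K A [a]) := by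
  simp only [factorTerm, List.drop_succ_cons, List.take_succ_cons, List.reverse_cons,
    show j + 1 + m = j + m + 1 by omega, List.drop_of_length_le h, shuffleW_nil_right, wp_append,
    pow_succ, mul_neg_one]
  generalize (-1 : K) ^ j = c
  simp only [neg_smul, mul_neg, mul_smul_comm, smul_mul_assoc, mul_assoc]

theorem sum_factorTerm_eq_lam {m : ℕ} (hm : m ≠ 0) :
    ∀ w : List A, ∑ i ∈ range (w.length - m + 1), factorTerm K A m w i = lam K A w
  | [] => by simp [factorTerm_zero_of_length_le]
  | a :: r => by
    by_cases hlen : (a :: r).length ≤ m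
    · rw [Nat.sub_eq_zero_of_le hlen, Finset.sum_range_one, factorTerm_zero_of_length_le hlen]
    obtain ⟨p, z, rfl⟩ : ∃ p z, r = p ++ [z] :=
      (List.eq_nil_or_concat' r).resolve_left (by rintro rfl; simp at hlen; omega)
    obtain ⟨n, hn⟩ : ∃ n, p.length + 1 = n + m :=
      ⟨p.length + 1 - m, by simp at hlen; omega⟩
    have hdropLast : ∑ i ∈ range (n + 1), factorTerm K A m (a :: p) i = lam K A (a :: p) := by
      simpa [hn] using sum_factorTerm_eq_lam hm (a :: p)
    have htail : ∑ i ∈ range (n + 1), factorTerm K A m (p ++ [z]) i = lam K A (p ++ [z]) := by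
      simpa [hn] using sum_factorTerm_eq_lam hm (p ++ [z])
    rw [lam_cons_append_singleton, ← hdropLast, ← htail, Finset.sum_mul, Finset.sum_mul,
      show (a :: (p ++ [z])).length - m + 1 = n + 1 + 1 by simp; omega, Finset.sum_range_succ,
      Finset.sum_range_succ', Finset.sum_range_succ' (fun i => _ * wp K A [z]),
      Finset.sum_range_succ (fun i => _ * wp K A [a]),
      factorTerm_cons_succ_of_length_le a (by simp; omega),
      Finset.sum_congr rfl fun j hj => factorTerm_cons_append_singleton_succ a z
        (by simp at hj; omega),
      ← List.cons_append, factorTerm_append_singleton_zero z (by simp; omega),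
      Finset.sum_sub_distrib]
    abel
  termination_by w => w.length

end

section

variable (K A : Type*) [CommRing K] [Fintype A] [DecidableEq A]

lemma sum_count_eq_length (l : List A) : ∑ c, l.count c = l.length := by
  simpa using Multiset.sum_count_eq_card (s := Finset.univ) (m := (l : Multiset A)) (by simp)

noncomputable def prefixDegreePart (k : A → ℕ) : NC K A →+ NC K A :=
  MonoidAlgebra.coeffAddEquiv.symm.toAddMonoidHom.comp <|
    (Finsupp.filterAddHom fun x : FreeMonoid A =>
      ∀ c, (x.toList.take (∑ c, k c)).count c = k c).comp
      MonoidAlgebra.coeffAddEquiv.toAddMonoidHom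

variable {K A} {k : A → ℕ}

lemma prefixDegreePart_lam_mul {u : List A} (hu : u.length = ∑ c, k c) (Q : NC K A) :
    prefixDegreePart K A k (lam K A u * Q) =
      if ∀ c, u.count c = k c then lam K A u * Q else 0 := by
  have hprefix : ∀ x ∈ (lam K A u * Q).coeff.support,
      (x.toList.take (∑ c, k c)).Perm u := fun x hx => by
    simpa [hu] using take_length_perm_of_mem_support_lam_mul K A u Q x hx
  apply MonoidAlgebra.coeff_injective
  split_ifs with hdeg
  · refine (Finsupp.filter_eq_self_iff _ _).2 fun x hx c => ?_
    rw [(hprefix x (Finsupp.mem_support_iff.2 hx)).count_eq, hdeg]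
  · refine (Finsupp.filter_eq_zero_iff _ _).2 fun x hx => ?_
    by_contra hx0
    exact hdeg fun c => (hprefix x (Finsupp.mem_support_iff.2 hx0)).count_eq c ▸ hx c

lemma prefixDegreePart_lam_of_length_lt {u : List A} (hu : u.length < ∑ c, k c) :
    prefixDegreePart K A k (lam K A u) = 0 := by
  apply MonoidAlgebra.coeff_injective
  refine (Finsupp.filter_eq_zero_iff _ _).2 fun x hx => ?_
  by_contra hx0
  have hxu := toList_perm_of_mem_support_lam K A u x (Finsupp.mem_support_iff.2 hx0)
  rw [List.take_of_length_le (by rw [hxu.length_eq]; omega)] at hx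
  have := sum_count_eq_length A x.toList
  simp only [hx, hxu.length_eq] at this
  omega

theorem prefixDegreePart_lam (hk : ∑ c, k c ≠ 0) (w : List A) :
    prefixDegreePart K A k (lam K A w) =
      ∑ i ∈ range (w.length - ∑ c, k c + 1),
        if ∀ c, ((w.drop i).take (∑ c, k c)).count c = k c then factorTerm K A (∑ c, k c) w i
        else 0 := by
  by_cases hw : ∑ c, k c ≤ w.length
  · rw [← sum_factorTerm_eq_lam hk w, map_sum]
    refine Finset.sum_congr rfl fun i hi => prefixDegreePart_lam_mul ?_ _
    simp at hi ⊢
    omega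
  · rw [prefixDegreePart_lam_of_length_lt (by omega), Nat.sub_eq_zero_of_le (by omega),
      Finset.sum_range_one, if_neg]
    intro hdeg
    have hlen : ((w.drop 0).take (∑ c, k c)).length = ∑ c, k c := by
      rw [← sum_count_eq_length]
      exact Finset.sum_congr rfl fun c _ => hdeg c
    simp only [List.drop_zero, List.length_take] at hlen
    omega

end

theorem lam_eq_sum_over_factors_of_multidegree_general
    (K A : Type*) [CommRing K] [Fintype A] [DecidableEq A]
    (w w' : List A)
    (η η' : ℤ) (hηη : η • lam K A w = η' • lam K A w')
    (k : A → ℕ) :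
    η • (∑ i ∈ Finset.range (w.length - (∑ c : A, k c) + 1),
        if ∀ c : A, ((w.drop i).take (∑ c : A, k c)).count c = k c then
          lam K A ((w.drop i).take (∑ c : A, k c)) *
            ((-1 : K) ^ i • shuffleW K A (w.take i).reverse (w.drop (i + (∑ c : A, k c))))
        else 0) =
      η' • (∑ i ∈ Finset.range (w'.length - (∑ c : A, k c) + 1),
        if ∀ c : A, ((w'.drop i).take (∑ c : A, k c)).count c = k c then
          lam K A ((w'.drop i).take (∑ c : A, k c)) *
            ((-1 : K) ^ i • shuffleW K A (w'.take i).reverse (w'.drop (i + (∑ c : A, k c))))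
        else 0) := by
  by_cases hk : ∑ c, k c = 0
  · simp [hk, lam_nil]
  · have := congrArg (prefixDegreePart K A k) hηη
    rwa [map_zsmul, map_zsmul, prefixDegreePart_lam hk, prefixDegreePart_lam hk] at this

theorem lam_eq_sum_over_factors_of_multidegree
    (K A : Type*) [CommRing K] [Fintype A] [DecidableEq A]
    (w w' : List A) (hdeg : ∀ c : A, w.count c = w'.count c)
    (η η' : ℤ) (hηη : η • lam K A w = η' • lam K A w')
    (k : A → ℕ) :
    η • (∑ i ∈ Finset.range (w.length - (∑ c : A, k c) + 1),
        if ∀ c : A, ((w.drop i).take (∑ c : A, k c)).count c = k c then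
          lam K A ((w.drop i).take (∑ c : A, k c)) *
            ((-1 : K) ^ i • shuffleW K A (w.take i).reverse (w.drop (i + (∑ c : A, k c))))
        else 0) =
      η' • (∑ i ∈ Finset.range (w'.length - (∑ c : A, k c) + 1),
        if ∀ c : A, ((w'.drop i).take (∑ c : A, k c)).count c = k c then
          lam K A ((w'.drop i).take (∑ c : A, k c)) *
            ((-1 : K) ^ i • shuffleW K A (w'.take i).reverse (w'.drop (i + (∑ c : A, k c))))
        else 0) :=
  lam_eq_sum_over_factors_of_multidegree_general K A w w' η η' hηη k
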